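/- arXiv:1704.00154 — 5 statements merged into one kernel-verified Lean document; each statement's English description precedes it below -/
import Mathlib

section
/- For a, b ∈ ℤ define the operator μ_{a,b} := q·t·𝓜_{a−3}∘𝓜_b − (t² + q²·t + q)·𝓜_{a−2}∘𝓜_{b−1} + (q·t² + t + q²)·𝓜_{a−1}∘𝓜_{b−2} − q·t·𝓜_a∘𝓜_{b−3} on K. Then μ_{a,b} = −μ_{b,a} for all a, b ∈ ℤ. (This is the componentwise form of the quadratic exchange relation g(z,w)·𝔢(z)𝔢(w) + g(w,z)·𝔢(w)𝔢(z) = 0, with g(z,w) = (z−qw)(z−t⁻¹w)(z−q⁻¹tw), satisfied by the generating current of the operators 𝓜ₙ.) -/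
/-!
Expanding the composition gives
`𝓜ₙ 𝓜ₘ f = Σᵢ Σⱼ xᵢⁿ Aᵢ (Γᵢ xⱼ)ᵐ Γᵢ(Aⱼ) ΓᵢΓⱼ f`, where `Aᵢ = Πⱼ≠ᵢ (t xᵢ − xⱼ)/(xᵢ − xⱼ)`.
Hence the `(i, j)` summand of `μ_{a,b} f` is `xᵢ^(a−3) y^(b−3) P(xᵢ, y) Aᵢ Γᵢ(Aⱼ) ΓᵢΓⱼ f` with
`y = Γᵢ xⱼ`, where the four coefficients of `μ` assemble into the cubic
`P(u, v) = (q u − v)(t v − u)(t u − q v)`. On the diagonal `y = q xᵢ` is a root of `P`.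
Off the diagonal the factor `q xᵢ − xⱼ` of `P` cancels the pole of `Γᵢ(Aⱼ)` at `xⱼ = q xᵢ`, and
what remains is antisymmetric under `i ↔ j` (the `Γᵢ` commute), so the `(i, j)` summand of
`μ_{a,b} f` is minus the `(j, i)` summand of `μ_{b,a} f`.
-/

open scoped BigOperators

noncomputable section

/-- The field `F(x₁,…,x_N)` of rational functions in `N` variables over `F`. -/
abbrev RatF (F : Type) [Field F] (N : ℕ) : Type :=
  FractionRing (MvPolynomial (Fin N) F)

/-- The variable `xᵢ` viewed inside the rational function field. -/
noncomputable def Xv (F : Type) [Field F] (N : ℕ) (i : Fin N) : RatF F N :=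
  algebraMap (MvPolynomial (Fin N) F) (RatF F N) (MvPolynomial.X i)

/-- The generalized Macdonald operator `𝓜ₙ`:
`𝓜ₙ f = Σᵢ xᵢⁿ · (Πⱼ≠ᵢ (t·xᵢ − xⱼ)/(xᵢ − xⱼ)) · Γᵢ(f)`. -/
noncomputable def Mac (F : Type) [Field F] (N : ℕ) (t : F)
    (Γ : Fin N → (RatF F N ≃ₐ[F] RatF F N)) (n : ℤ) (f : RatF F N) : RatF F N :=
  ∑ i : Fin N, Xv F N i ^ n *
    (∏ j ∈ Finset.univ.erase i, (t • Xv F N i - Xv F N j) / (Xv F N i - Xv F N j)) *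
    Γ i f

section RationalFunctionField

variable {F : Type} [Field F] {N : ℕ}

theorem RatF.algHom_ext {L : Type*} [Semiring L] [Algebra F L] {φ ψ : RatF F N →ₐ[F] L}
    (h : ∀ i, φ (Xv F N i) = ψ (Xv F N i)) : φ = ψ :=
  IsLocalization.algHom_ext (nonZeroDivisors _) (MvPolynomial.algHom_ext h)

theorem Xv_ne_smul_Xv {i j : Fin N} (hij : i ≠ j) (c : F) : Xv F N i ≠ c • Xv F N j := by
  rw [← sub_ne_zero]
  have hpoly : (MvPolynomial.X i - c • MvPolynomial.X j : MvPolynomial (Fin N) F) ≠ 0 := by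
    intro h
    simpa [hij.symm] using congrArg (MvPolynomial.eval (Pi.single i 1)) h
  have h := (map_ne_zero_iff (IsScalarTower.toAlgHom F _ (RatF F N))
    (IsFractionRing.injective (MvPolynomial (Fin N) F) (RatF F N))).2 hpoly
  rwa [map_sub, map_smul] at h

theorem Xv_ne_zero (i : Fin N) : Xv F N i ≠ 0 :=
  (map_ne_zero_iff _ (IsFractionRing.injective _ _)).2 (MvPolynomial.X_ne_zero i)

theorem RatF.shift_apply_comm {q : F} {Γ : Fin N → (RatF F N ≃ₐ[F] RatF F N)}
    (hΓ : ∀ i j, Γ i (Xv F N j) = if j = i then q • Xv F N j else Xv F N j) (i j : Fin N)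
    (g : RatF F N) : Γ i (Γ j g) = Γ j (Γ i g) := by
  have h : ((Γ i).toAlgHom.comp (Γ j).toAlgHom) = (Γ j).toAlgHom.comp (Γ i).toAlgHom :=
    RatF.algHom_ext fun k => by
      change Γ i (Γ j (Xv F N k)) = Γ j (Γ i (Xv F N k))
      rw [hΓ j k, hΓ i k]
      split_ifs <;> subst_vars <;> simp [*]
  exact DFunLike.congr_fun h g

end RationalFunctionField

namespace Macdonald

open Finset

theorem zpow_exchange_combination {K : Type*} [Field K] {u v : K} (hu : u ≠ 0) (hv : v ≠ 0)
    (Q T : K) (a b : ℤ) :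
    Q * T * (u ^ (a - 3) * v ^ b) - (T ^ 2 + Q ^ 2 * T + Q) * (u ^ (a - 2) * v ^ (b - 1))
      + (Q * T ^ 2 + T + Q ^ 2) * (u ^ (a - 1) * v ^ (b - 2)) - Q * T * (u ^ a * v ^ (b - 3))
    = u ^ (a - 3) * v ^ (b - 3) * ((Q * u - v) * (T * v - u) * (T * u - Q * v)) := by
  simp only [zpow_sub₀ hu, zpow_sub₀ hv, zpow_ofNat]
  field_simp
  ring

theorem exchange_pair_antisymm {K : Type*} [Field K] {Q T u v : K} (huv : u ≠ v)
    (hvqu : v ≠ Q * u) (huqv : u ≠ Q * v) :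
    (T * u - v) / (u - v) * ((T * v - Q * u) / (v - Q * u))
        * ((Q * u - v) * (T * v - u) * (T * u - Q * v))
      = -((T * v - u) / (v - u) * ((T * u - Q * v) / (u - Q * v))
        * ((Q * v - u) * (T * u - v) * (T * v - Q * u))) := by
  rw [div_mul_div_comm, div_mul_div_comm, div_mul_eq_mul_div, div_mul_eq_mul_div, ← neg_div,
    div_eq_div_iff (mul_ne_zero (sub_ne_zero.2 huv) (sub_ne_zero.2 hvqu))
      (mul_ne_zero (sub_ne_zero.2 huv.symm) (sub_ne_zero.2 huqv))]
  ring

variable {ι F K : Type*} [Fintype ι] [DecidableEq ι] [Field F] [Field K] [Algebra F K]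

def weight (x : ι → K) (t : F) (i : ι) : K :=
  ∏ j ∈ univ.erase i, (t • x i - x j) / (x i - x j)

def op (x : ι → K) (t : F) (Γ : ι → K ≃ₐ[F] K) (n : ℤ) (f : K) : K :=
  ∑ i, x i ^ n * weight x t i * Γ i f

def exchange (x : ι → K) (t q : F) (Γ : ι → K ≃ₐ[F] K) (a b : ℤ) (f : K) : K :=
  (q * t) • op x t Γ (a - 3) (op x t Γ b f)
    - (t ^ 2 + q ^ 2 * t + q) • op x t Γ (a - 2) (op x t Γ (b - 1) f)
    + (q * t ^ 2 + t + q ^ 2) • op x t Γ (a - 1) (op x t Γ (b - 2) f)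
    - (q * t) • op x t Γ a (op x t Γ (b - 3) f)

def exchangeTerm (x : ι → K) (t q : F) (Γ : ι → K ≃ₐ[F] K) (a b : ℤ) (f : K) (i j : ι) : K :=
  x i ^ (a - 3) * Γ i (x j) ^ (b - 3)
    * ((q • x i - Γ i (x j)) * (t • Γ i (x j) - x i) * (t • x i - q • Γ i (x j)))
    * (weight x t i * Γ i (weight x t j) * Γ i (Γ j f))

variable {x : ι → K} {t q : F} {Γ : ι → K ≃ₐ[F] K}

theorem op_op (n m : ℤ) (f : K) :
    op x t Γ n (op x t Γ m f)
      = ∑ i, ∑ j, x i ^ n * weight x t i * (Γ i (x j) ^ m * Γ i (weight x t j) * Γ i (Γ j f)) := by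
  simp only [op, map_sum, map_mul, map_zpow₀, mul_sum]

theorem exchange_eq_sum (hx : ∀ i, x i ≠ 0) (a b : ℤ) (f : K) :
    exchange x t q Γ a b f = ∑ i, ∑ j, exchangeTerm x t q Γ a b f i j := by
  simp only [exchange, op_op, smul_sum, ← sum_sub_distrib, ← sum_add_distrib]
  refine sum_congr rfl fun i _ => sum_congr rfl fun j _ => ?_
  have hy : Γ i (x j) ≠ 0 := (map_ne_zero_iff _ (Γ i).injective).2 (hx j)
  have := zpow_exchange_combination (hx i) hy (algebraMap F K q) (algebraMap F K t) a b
  simp only [exchangeTerm, Algebra.smul_def, map_add, map_mul, map_pow] at this ⊢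
  linear_combination (weight x t i * Γ i (weight x t j) * Γ i (Γ j f)) * this

theorem weight_eq_mul_prod {i j : ι} (hij : i ≠ j) :
    weight x t i = (t • x i - x j) / (x i - x j)
      * ∏ k ∈ (univ.erase i).erase j, (t • x i - x k) / (x i - x k) :=
  (mul_prod_erase _ _ (mem_erase.2 ⟨hij.symm, mem_univ j⟩)).symm

theorem map_weight (hΓ : ∀ i j, Γ i (x j) = if j = i then q • x j else x j) {i j : ι}
    (hij : i ≠ j) :
    Γ i (weight x t j) = (t • x j - q • x i) / (x j - q • x i)
      * ∏ k ∈ (univ.erase j).erase i, (t • x j - x k) / (x j - x k) := by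
  have hfix : ∀ k ≠ i, Γ i (x k) = x k := fun k hk => by rw [hΓ, if_neg hk]
  rw [weight_eq_mul_prod hij.symm, map_mul, map_prod]
  simp only [map_div₀, map_sub, map_smul, hfix j hij.symm, hΓ i i, if_pos]
  congr 1
  refine prod_congr rfl fun k hk => ?_
  rw [hfix k (mem_erase.1 hk).1]

theorem exchangeTerm_self (hΓ : ∀ i j, Γ i (x j) = if j = i then q • x j else x j)
    (a b : ℤ) (f : K) (i : ι) : exchangeTerm x t q Γ a b f i i = 0 := by
  simp only [exchangeTerm, hΓ i i, if_pos, sub_self, zero_mul, mul_zero]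

theorem exchangeTerm_swap (hsep : ∀ i j, i ≠ j → x i ≠ x j)
    (hqsep : ∀ i j, i ≠ j → x i ≠ q • x j)
    (hΓ : ∀ i j, Γ i (x j) = if j = i then q • x j else x j)
    (hcomm : ∀ i j g, Γ i (Γ j g) = Γ j (Γ i g)) (a b : ℤ) (f : K) {i j : ι} (hij : i ≠ j) :
    exchangeTerm x t q Γ a b f i j = -exchangeTerm x t q Γ b a f j i := by
  have key := exchange_pair_antisymm (Q := algebraMap F K q) (T := algebraMap F K t)
    (hsep i j hij) (by simpa [Algebra.smul_def] using hqsep j i hij.symm)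
    (by simpa [Algebra.smul_def] using hqsep i j hij)
  rw [exchangeTerm, exchangeTerm, hΓ i j, if_neg hij.symm, hΓ j i, if_neg hij, hcomm j i,
    map_weight hΓ hij, map_weight hΓ hij.symm, weight_eq_mul_prod hij, weight_eq_mul_prod hij.symm]
  simp only [Algebra.smul_def] at key ⊢
  linear_combination (x i ^ (a - 3) * x j ^ (b - 3) * Γ i (Γ j f)
    * (∏ k ∈ (univ.erase i).erase j, (algebraMap F K t * x i - x k) / (x i - x k))
    * (∏ k ∈ (univ.erase j).erase i, (algebraMap F K t * x j - x k) / (x j - x k))) * key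

theorem exchange_antisymm (hx : ∀ i, x i ≠ 0) (hsep : ∀ i j, i ≠ j → x i ≠ x j)
    (hqsep : ∀ i j, i ≠ j → x i ≠ q • x j)
    (hΓ : ∀ i j, Γ i (x j) = if j = i then q • x j else x j)
    (hcomm : ∀ i j g, Γ i (Γ j g) = Γ j (Γ i g)) (a b : ℤ) (f : K) :
    exchange x t q Γ a b f = -exchange x t q Γ b a f := by
  have hterm : ∀ i j, exchangeTerm x t q Γ a b f i j = -exchangeTerm x t q Γ b a f j i := by
    intro i j
    rcases eq_or_ne i j with rfl | hij
    · simp only [exchangeTerm_self hΓ, neg_zero]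
    · exact exchangeTerm_swap hsep hqsep hΓ hcomm a b f hij
  simp only [exchange_eq_sum hx, hterm, sum_neg_distrib]
  rw [sum_comm]

end Macdonald

-- Both sides are `Macdonald.exchange (Xv F N) t q Γ`, definitionally.
theorem statement2_general (F : Type) [Field F] (q t : F)
    (N : ℕ)
    (Γ : Fin N → (RatF F N ≃ₐ[F] RatF F N))
    (hΓ : ∀ i j : Fin N, Γ i (Xv F N j) = if j = i then q • Xv F N j else Xv F N j)
    (a b : ℤ) (f : RatF F N) :
    ((q * t) • Mac F N t Γ (a - 3) (Mac F N t Γ b f)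
        - (t ^ 2 + q ^ 2 * t + q) • Mac F N t Γ (a - 2) (Mac F N t Γ (b - 1) f)
        + (q * t ^ 2 + t + q ^ 2) • Mac F N t Γ (a - 1) (Mac F N t Γ (b - 2) f)
        - (q * t) • Mac F N t Γ a (Mac F N t Γ (b - 3) f))
      = -((q * t) • Mac F N t Γ (b - 3) (Mac F N t Γ a f)
        - (t ^ 2 + q ^ 2 * t + q) • Mac F N t Γ (b - 2) (Mac F N t Γ (a - 1) f)
        + (q * t ^ 2 + t + q ^ 2) • Mac F N t Γ (b - 1) (Mac F N t Γ (a - 2) f)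
        - (q * t) • Mac F N t Γ b (Mac F N t Γ (a - 3) f)) :=
  Macdonald.exchange_antisymm Xv_ne_zero
    (fun _ _ hij => by simpa using Xv_ne_smul_Xv hij (1 : F)) (fun _ _ hij => Xv_ne_smul_Xv hij q)
    hΓ (RatF.shift_apply_comm hΓ) a b f

/-- the exchange relation `μ_{a,b} = −μ_{b,a}` for the operators
`μ_{a,b} = qt·𝓜_{a−3}𝓜_b − (t²+q²t+q)·𝓜_{a−2}𝓜_{b−1} + (qt²+t+q²)·𝓜_{a−1}𝓜_{b−2} − qt·𝓜_a𝓜_{b−3}`. -/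
theorem statement2 (F : Type) [Field F] [CharZero F] (q t : F) (hq : q ≠ 0) (ht : t ≠ 0)
    (N : ℕ) (hN : 1 ≤ N)
    (Γ : Fin N → (RatF F N ≃ₐ[F] RatF F N))
    (hΓ : ∀ i j : Fin N, Γ i (Xv F N j) = if j = i then q • Xv F N j else Xv F N j)
    (a b : ℤ) (f : RatF F N) :
    ((q * t) • Mac F N t Γ (a - 3) (Mac F N t Γ b f)
        - (t ^ 2 + q ^ 2 * t + q) • Mac F N t Γ (a - 2) (Mac F N t Γ (b - 1) f)
        + (q * t ^ 2 + t + q ^ 2) • Mac F N t Γ (a - 1) (Mac F N t Γ (b - 2) f)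
        - (q * t) • Mac F N t Γ a (Mac F N t Γ (b - 3) f))
      = -((q * t) • Mac F N t Γ (b - 3) (Mac F N t Γ a f)
        - (t ^ 2 + q ^ 2 * t + q) • Mac F N t Γ (b - 2) (Mac F N t Γ (a - 1) f)
        + (q * t ^ 2 + t + q ^ 2) • Mac F N t Γ (b - 1) (Mac F N t Γ (a - 2) f)
        - (q * t) • Mac F N t Γ b (Mac F N t Γ (a - 3) f)) :=
  statement2_general F q t N Γ hΓ a b f

end
end

section
/- For all m, n ∈ ℤ, the commutator 𝓜_m ∘ 𝓑ₙ − 𝓑ₙ ∘ 𝓜_m is the operator of multiplication by the rational function Σ_{i=1}^N xᵢ^{m+n} · ( qⁿ · Π_{k≠i} ((t·xᵢ − x_k)(q·xᵢ − t·x_k))/((xᵢ − x_k)(q·xᵢ − x_k)) − q^{−m} · Π_{k≠i} ((xᵢ − t·x_k)(t·xᵢ − q·x_k))/((xᵢ − x_k)(xᵢ − q·x_k)) ): all cross terms in the two compositions cancel. (This is the componentwise form of the relation [𝔢(z), 𝔣(w)] = (δ(z/w)/g(1,1))·(ψ⁺(z) − ψ⁻(z)) between the two fundamental Macdonald currents.)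 -/
open scoped BigOperators

noncomputable section

/-- The dual operator `𝓑ₙ` (the operator `𝓓^{q⁻¹,t⁻¹}_{1;n}` up to a power of `t^{1/2}`):
`𝓑ₙ f = Σᵢ xᵢⁿ · (Πₖ≠ᵢ (xᵢ − t·xₖ)/(xᵢ − xₖ)) · Γᵢ⁻¹(f)`. -/
noncomputable def MacB (F : Type) [Field F] (N : ℕ) (t : F)
    (Γ : Fin N → (RatF F N ≃ₐ[F] RatF F N)) (n : ℤ) (f : RatF F N) : RatF F N :=
  ∑ i : Fin N, Xv F N i ^ n *
    (∏ k ∈ Finset.univ.erase i, (Xv F N i - t • Xv F N k) / (Xv F N i - Xv F N k)) *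
    (Γ i).symm f


namespace Statement3Aux

lemma alg_smul (F : Type) [Field F] (N : ℕ) (e : RatF F N ≃ₐ[F] RatF F N)
    (a : F) (x : RatF F N) : e (a • x) = a • e x := by
  rw [Algebra.smul_def, map_mul, AlgEquiv.commutes, ← Algebra.smul_def]

lemma smul_zpow' (F : Type) [Field F] (N : ℕ) (a : F) (x : RatF F N) (k : ℤ) :
    (a • x) ^ k = (a ^ k) • x ^ k := by
  rw [Algebra.smul_def, mul_zpow, ← map_zpow₀ (algebraMap F (RatF F N)), ← Algebra.smul_def]

lemma Xsub_ne (F : Type) [Field F] (N : ℕ) (a b : F) (ha : a ≠ 0)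
    (i j : Fin N) (hij : i ≠ j) : a • Xv F N i - b • Xv F N j ≠ 0 := by
  have hpoly : (MvPolynomial.C a * MvPolynomial.X i - MvPolynomial.C b * MvPolynomial.X j :
      MvPolynomial (Fin N) F) ≠ 0 := by
    intro h
    have := congrArg (MvPolynomial.coeff (Finsupp.single i 1)) h
    simp [MvPolynomial.coeff_sub, MvPolynomial.coeff_C_mul, MvPolynomial.coeff_X',
      Finsupp.single_left_inj, hij.symm, (Ne.symm hij)] at this
    exact ha this
  have hinj : Function.Injective (algebraMap (MvPolynomial (Fin N) F) (RatF F N)) :=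
    IsFractionRing.injective _ _
  intro h
  apply hpoly
  apply hinj
  rw [map_sub, map_mul, map_mul, map_zero]
  have hC : ∀ c : F, algebraMap (MvPolynomial (Fin N) F) (RatF F N) (MvPolynomial.C c)
      = algebraMap F (RatF F N) c := by
    intro c
    rw [IsScalarTower.algebraMap_apply F (MvPolynomial (Fin N) F) (RatF F N)]
    rfl
  rw [hC, hC, ← Algebra.smul_def, ← Algebra.smul_def]
  exact h

lemma Xv_ne (F : Type) [Field F] (N : ℕ) (i : Fin N) : Xv F N i ≠ 0 := by
  have h : (MvPolynomial.X i : MvPolynomial (Fin N) F) ≠ 0 := MvPolynomial.X_ne_zero i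
  simp [Xv, map_eq_zero_iff _ (IsFractionRing.injective (MvPolynomial (Fin N) F) (RatF F N)), h]

lemma Xsub_ne_one (F : Type) [Field F] (N : ℕ) (b : F)
    (i j : Fin N) (hij : i ≠ j) : Xv F N i - b • Xv F N j ≠ 0 := by
  have := Xsub_ne F N 1 b one_ne_zero i j hij
  simpa using this

lemma Xsub_ne_one' (F : Type) [Field F] (N : ℕ) (a : F) (ha : a ≠ 0)
    (i j : Fin N) (hij : i ≠ j) : a • Xv F N i - Xv F N j ≠ 0 := by
  have := Xsub_ne F N a 1 ha i j hij
  simpa using this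

lemma Xsub_ne_plain (F : Type) [Field F] (N : ℕ)
    (i j : Fin N) (hij : i ≠ j) : Xv F N i - Xv F N j ≠ 0 := by
  have := Xsub_ne F N 1 1 one_ne_zero i j hij
  simpa using this

lemma gamma_swap (F : Type) [Field F] (q : F) (N : ℕ)
    (Γ : Fin N → (RatF F N ≃ₐ[F] RatF F N))
    (hΓ : ∀ i j : Fin N, Γ i (Xv F N j) = if j = i then q • Xv F N j else Xv F N j)
    (i j : Fin N) (g : RatF F N) : Γ i (Γ j g) = Γ j (Γ i g) := by
  have hC : ∀ c : F, algebraMap (MvPolynomial (Fin N) F) (RatF F N) (MvPolynomial.C c)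
      = algebraMap F (RatF F N) c := by
    intro c
    rw [IsScalarTower.algebraMap_apply F (MvPolynomial (Fin N) F) (RatF F N)]
    rfl
  have key : ((Γ i : RatF F N →+* RatF F N).comp
        (Γ j : RatF F N →+* RatF F N)).comp
        (algebraMap (MvPolynomial (Fin N) F) (RatF F N))
      = ((Γ j : RatF F N →+* RatF F N).comp
        (Γ i : RatF F N →+* RatF F N)).comp
        (algebraMap (MvPolynomial (Fin N) F) (RatF F N)) := by
    apply MvPolynomial.ringHom_ext
    · intro a
      simp [hC a, AlgEquiv.commutes]
    · intro k
      simp only [RingHom.comp_apply, RingHom.coe_coe]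
      show Γ i (Γ j (Xv F N k)) = Γ j (Γ i (Xv F N k))
      rw [hΓ j k, hΓ i k]
      rcases eq_or_ne k j with hkj | hkj <;> rcases eq_or_ne k i with hki | hki
      · subst hkj; subst hki; rfl
      · subst hkj
        rw [if_pos rfl, if_neg hki, alg_smul, hΓ i k, if_neg hki, hΓ k k, if_pos rfl]
      · subst hki
        rw [if_pos rfl, if_neg hkj, alg_smul, hΓ j k, if_neg hkj, hΓ k k, if_pos rfl]
      · rw [if_neg hki, if_neg hkj, hΓ i k, if_neg hki, hΓ j k, if_neg hkj]
  have h2 := IsLocalization.ringHom_ext (nonZeroDivisors (MvPolynomial (Fin N) F)) key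
  exact RingHom.congr_fun h2 g

lemma gamma_symm_X (F : Type) [Field F] (q : F) (hq : q ≠ 0) (N : ℕ)
    (Γ : Fin N → (RatF F N ≃ₐ[F] RatF F N))
    (hΓ : ∀ i j : Fin N, Γ i (Xv F N j) = if j = i then q • Xv F N j else Xv F N j)
    (i j : Fin N) : (Γ i).symm (Xv F N j) = if j = i then q⁻¹ • Xv F N j else Xv F N j := by
  rw [AlgEquiv.symm_apply_eq]
  split_ifs with h
  · rw [alg_smul, hΓ i j, if_pos h, smul_smul, inv_mul_cancel₀ hq, one_smul]
  · rw [hΓ i j, if_neg h]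

set_option maxHeartbeats 2000000 in
lemma offdiag (F : Type) [Field F] (q t : F) (hq : q ≠ 0) (N : ℕ)
    (Γ : Fin N → (RatF F N ≃ₐ[F] RatF F N))
    (hΓ : ∀ i j : Fin N, Γ i (Xv F N j) = if j = i then q • Xv F N j else Xv F N j)
    (i j : Fin N) (hij : i ≠ j) (m n : ℤ) :
    Xv F N i ^ m *
      (∏ k ∈ Finset.univ.erase i, (t • Xv F N i - Xv F N k) / (Xv F N i - Xv F N k)) *
      Γ i (Xv F N j ^ n *
        ∏ k ∈ Finset.univ.erase j, (Xv F N j - t • Xv F N k) / (Xv F N j - Xv F N k))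
    = Xv F N j ^ n *
      (∏ k ∈ Finset.univ.erase j, (Xv F N j - t • Xv F N k) / (Xv F N j - Xv F N k)) *
      (Γ j).symm (Xv F N i ^ m *
        ∏ k ∈ Finset.univ.erase i, (t • Xv F N i - Xv F N k) / (Xv F N i - Xv F N k)) := by
  set x := Xv F N with hx
  have himem : i ∈ Finset.univ.erase j := Finset.mem_erase.mpr ⟨hij, Finset.mem_univ i⟩
  have hjmem : j ∈ Finset.univ.erase i := Finset.mem_erase.mpr ⟨hij.symm, Finset.mem_univ j⟩
  have hG1 : Γ i (x j ^ n *
        ∏ k ∈ Finset.univ.erase j, (x j - t • x k) / (x j - x k))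
      = x j ^ n * ((x j - (t*q) • x i) / (x j - q • x i) *
          ∏ k ∈ (Finset.univ.erase j).erase i, (x j - t • x k) / (x j - x k)) := by
    rw [map_mul, map_zpow₀, hΓ i j, if_neg hij.symm, map_prod]
    congr 1
    rw [← Finset.mul_prod_erase _ _ himem]
    congr 1
    · rw [map_div₀, map_sub, map_sub, alg_smul, hΓ i j, if_neg hij.symm, hΓ i i, if_pos rfl,
        smul_smul]
    · refine Finset.prod_congr rfl fun k hk => ?_
      have hki : k ≠ i := (Finset.mem_erase.mp hk).1
      rw [map_div₀, map_sub, map_sub, alg_smul, hΓ i j, if_neg hij.symm, hΓ i k, if_neg hki]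
  have hG2 : (Γ j).symm (x i ^ m *
        ∏ k ∈ Finset.univ.erase i, (t • x i - x k) / (x i - x k))
      = x i ^ m * ((t • x i - q⁻¹ • x j) / (x i - q⁻¹ • x j) *
          ∏ k ∈ (Finset.univ.erase i).erase j, (t • x i - x k) / (x i - x k)) := by
    rw [map_mul, map_zpow₀, gamma_symm_X F q hq N Γ hΓ j i, if_neg hij, map_prod]
    congr 1
    rw [← Finset.mul_prod_erase _ _ hjmem]
    congr 1
    · rw [map_div₀, map_sub, map_sub, alg_smul, gamma_symm_X F q hq N Γ hΓ j i, if_neg hij,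
        gamma_symm_X F q hq N Γ hΓ j j, if_pos rfl]
    · refine Finset.prod_congr rfl fun k hk => ?_
      have hkj : k ≠ j := (Finset.mem_erase.mp hk).1
      rw [map_div₀, map_sub, map_sub, alg_smul, gamma_symm_X F q hq N Γ hΓ j i, if_neg hij,
        gamma_symm_X F q hq N Γ hΓ j k, if_neg hkj]
  rw [hG1, hG2]
  rw [← Finset.mul_prod_erase _ _ hjmem, ← Finset.mul_prod_erase _ _ himem]
  set R := ∏ k ∈ (Finset.univ.erase i).erase j, (t • x i - x k) / (x i - x k) with hR
  set S := ∏ k ∈ (Finset.univ.erase j).erase i, (x j - t • x k) / (x j - x k) with hS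
  have h1 : x i - x j ≠ 0 := Xsub_ne_plain F N i j hij
  have h2 : x j - q • x i ≠ 0 := Xsub_ne_one F N q j i hij.symm
  have h3 : x j - x i ≠ 0 := Xsub_ne_plain F N j i hij.symm
  have h4 : x i - q⁻¹ • x j ≠ 0 := Xsub_ne_one F N q⁻¹ i j hij
  have hcq : algebraMap F (RatF F N) q ≠ 0 := (map_ne_zero _).mpr hq
  have e1 : (t • x i - x j) / (x i - x j) = (x j - t • x i) / (x j - x i) := by
    rw [div_eq_div_iff h1 h3]
    simp only [Algebra.smul_def]
    ring
  have e2 : (x j - (t*q) • x i) / (x j - q • x i)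
      = (t • x i - q⁻¹ • x j) / (x i - q⁻¹ • x j) := by
    rw [div_eq_div_iff h2 h4]
    simp only [Algebra.smul_def, map_mul, map_inv₀]
    linear_combination ((algebraMap F (RatF F N) t - 1) * x i * x j) * mul_inv_cancel₀ hcq
  have hF : (t • x i - x j) / (x i - x j) * ((x j - (t*q) • x i) / (x j - q • x i))
      = (x j - t • x i) / (x j - x i) * ((t • x i - q⁻¹ • x j) / (x i - q⁻¹ • x j)) := by
    rw [e1, e2]
  linear_combination (x i ^ m * x j ^ n * R * S) * hF

set_option maxHeartbeats 2000000 in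
lemma diag (F : Type) [Field F] (q t : F) (hq : q ≠ 0) (N : ℕ)
    (Γ : Fin N → (RatF F N ≃ₐ[F] RatF F N))
    (hΓ : ∀ i j : Fin N, Γ i (Xv F N j) = if j = i then q • Xv F N j else Xv F N j)
    (i : Fin N) (m n : ℤ) :
    Xv F N i ^ m *
      (∏ k ∈ Finset.univ.erase i, (t • Xv F N i - Xv F N k) / (Xv F N i - Xv F N k)) *
      Γ i (Xv F N i ^ n *
        ∏ k ∈ Finset.univ.erase i, (Xv F N i - t • Xv F N k) / (Xv F N i - Xv F N k))
    - Xv F N i ^ n *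
      (∏ k ∈ Finset.univ.erase i, (Xv F N i - t • Xv F N k) / (Xv F N i - Xv F N k)) *
      (Γ i).symm (Xv F N i ^ m *
        ∏ k ∈ Finset.univ.erase i, (t • Xv F N i - Xv F N k) / (Xv F N i - Xv F N k))
    = Xv F N i ^ (m + n) *
        ((q ^ n) • ∏ k ∈ Finset.univ.erase i,
            ((t • Xv F N i - Xv F N k) * (q • Xv F N i - t • Xv F N k)) /
              ((Xv F N i - Xv F N k) * (q • Xv F N i - Xv F N k))
          - (q ^ (-m)) • ∏ k ∈ Finset.univ.erase i,
            ((Xv F N i - t • Xv F N k) * (t • Xv F N i - q • Xv F N k)) /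
              ((Xv F N i - Xv F N k) * (Xv F N i - q • Xv F N k))) := by
  set x := Xv F N with hx
  have hcq : algebraMap F (RatF F N) q ≠ 0 := (map_ne_zero _).mpr hq
  have hGa : Γ i (x i ^ n *
        ∏ k ∈ Finset.univ.erase i, (x i - t • x k) / (x i - x k))
      = ((q ^ n) • x i ^ n) *
          ∏ k ∈ Finset.univ.erase i, (q • x i - t • x k) / (q • x i - x k) := by
    rw [map_mul, map_zpow₀, hΓ i i, if_pos rfl, smul_zpow', map_prod]
    congr 1
    refine Finset.prod_congr rfl fun k hk => ?_
    have hki : k ≠ i := (Finset.mem_erase.mp hk).1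
    rw [map_div₀, map_sub, map_sub, alg_smul, hΓ i i, if_pos rfl, hΓ i k, if_neg hki]
  have hGb : (Γ i).symm (x i ^ m *
        ∏ k ∈ Finset.univ.erase i, (t • x i - x k) / (x i - x k))
      = ((q ^ (-m)) • x i ^ m) *
          ∏ k ∈ Finset.univ.erase i, (t • (q⁻¹ • x i) - x k) / (q⁻¹ • x i - x k) := by
    rw [map_mul, map_zpow₀, gamma_symm_X F q hq N Γ hΓ i i, if_pos rfl, smul_zpow',
      inv_zpow, ← zpow_neg, map_prod]
    congr 1
    refine Finset.prod_congr rfl fun k hk => ?_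
    have hki : k ≠ i := (Finset.mem_erase.mp hk).1
    rw [map_div₀, map_sub, map_sub, alg_smul, gamma_symm_X F q hq N Γ hΓ i i, if_pos rfl,
      gamma_symm_X F q hq N Γ hΓ i k, if_neg hki]
  have hP1 : (∏ k ∈ Finset.univ.erase i, (t • x i - x k) / (x i - x k)) *
        (∏ k ∈ Finset.univ.erase i, (q • x i - t • x k) / (q • x i - x k))
      = ∏ k ∈ Finset.univ.erase i,
          ((t • x i - x k) * (q • x i - t • x k)) / ((x i - x k) * (q • x i - x k)) := by
    rw [← Finset.prod_mul_distrib]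
    exact Finset.prod_congr rfl fun k _ => div_mul_div_comm _ _ _ _
  have hP2 : (∏ k ∈ Finset.univ.erase i, (x i - t • x k) / (x i - x k)) *
        (∏ k ∈ Finset.univ.erase i, (t • (q⁻¹ • x i) - x k) / (q⁻¹ • x i - x k))
      = ∏ k ∈ Finset.univ.erase i,
          ((x i - t • x k) * (t • x i - q • x k)) / ((x i - x k) * (x i - q • x k)) := by
    rw [← Finset.prod_mul_distrib]
    refine Finset.prod_congr rfl fun k hk => ?_
    have hki : k ≠ i := (Finset.mem_erase.mp hk).1
    have hfac : (t • (q⁻¹ • x i) - x k) / (q⁻¹ • x i - x k)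
        = (t • x i - q • x k) / (x i - q • x k) := by
      have d1 : q⁻¹ • x i - x k ≠ 0 := Xsub_ne_one' F N q⁻¹ (inv_ne_zero hq) i k hki.symm
      have d2 : x i - q • x k ≠ 0 := Xsub_ne_one F N q i k hki.symm
      rw [div_eq_div_iff d1 d2]
      simp only [Algebra.smul_def, map_inv₀]
      linear_combination ((1 - algebraMap F (RatF F N) t) * x i * x k) * mul_inv_cancel₀ hcq
    rw [hfac, div_mul_div_comm]
  rw [hGa, hGb, zpow_add₀ (Xv_ne F N i) m n]
  simp only [Algebra.smul_def] at hP1 hP2 ⊢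
  linear_combination
    (algebraMap F (RatF F N) (q ^ n) * x i ^ m * x i ^ n) * hP1
    - (algebraMap F (RatF F N) (q ^ (-m)) * x i ^ m * x i ^ n) * hP2

end Statement3Aux


/-- the commutator `[𝓜_m, 𝓑ₙ]` is multiplication by the explicit rational
function `Σᵢ xᵢ^{m+n}·( qⁿ·Πₖ≠ᵢ ((t xᵢ−xₖ)(q xᵢ−t xₖ))/((xᵢ−xₖ)(q xᵢ−xₖ))
− q^{−m}·Πₖ≠ᵢ ((xᵢ−t xₖ)(t xᵢ−q xₖ))/((xᵢ−xₖ)(xᵢ−q xₖ)) )`. -/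
theorem statement3 (F : Type) [Field F] [CharZero F] (q t : F) (hq : q ≠ 0) (ht : t ≠ 0)
    (N : ℕ) (hN : 1 ≤ N)
    (Γ : Fin N → (RatF F N ≃ₐ[F] RatF F N))
    (hΓ : ∀ i j : Fin N, Γ i (Xv F N j) = if j = i then q • Xv F N j else Xv F N j)
    (m n : ℤ) (f : RatF F N) :
    Mac F N t Γ m (MacB F N t Γ n f) - MacB F N t Γ n (Mac F N t Γ m f)
      = (∑ i : Fin N, Xv F N i ^ (m + n) *
          ((q ^ n) • ∏ k ∈ Finset.univ.erase i,
              ((t • Xv F N i - Xv F N k) * (q • Xv F N i - t • Xv F N k)) /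
                ((Xv F N i - Xv F N k) * (q • Xv F N i - Xv F N k))
            - (q ^ (-m)) • ∏ k ∈ Finset.univ.erase i,
              ((Xv F N i - t • Xv F N k) * (t • Xv F N i - q • Xv F N k)) /
                ((Xv F N i - Xv F N k) * (Xv F N i - q • Xv F N k)))) * f := by
  classical
  have hswap : ∀ (i j : Fin N) (g : RatF F N),
      (Γ j).symm (Γ i g) = Γ i ((Γ j).symm g) := by
    intro i j g
    apply (Γ j).injective
    rw [AlgEquiv.apply_symm_apply, ← Statement3Aux.gamma_swap F q N Γ hΓ i j,
      AlgEquiv.apply_symm_apply]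
  have e1 : Mac F N t Γ m (MacB F N t Γ n f)
      = ∑ i : Fin N, ∑ j : Fin N,
          (Xv F N i ^ m *
            (∏ k ∈ Finset.univ.erase i, (t • Xv F N i - Xv F N k) / (Xv F N i - Xv F N k)) *
            Γ i (Xv F N j ^ n *
              ∏ k ∈ Finset.univ.erase j, (Xv F N j - t • Xv F N k) / (Xv F N j - Xv F N k))) *
          Γ i ((Γ j).symm f) := by
    unfold Mac MacB
    refine Finset.sum_congr rfl fun i _ => ?_
    rw [map_sum, Finset.mul_sum]
    refine Finset.sum_congr rfl fun j _ => ?_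
    rw [map_mul, ← mul_assoc]
  have e2 : MacB F N t Γ n (Mac F N t Γ m f)
      = ∑ i : Fin N, ∑ j : Fin N,
          (Xv F N j ^ n *
            (∏ k ∈ Finset.univ.erase j, (Xv F N j - t • Xv F N k) / (Xv F N j - Xv F N k)) *
            (Γ j).symm (Xv F N i ^ m *
              ∏ k ∈ Finset.univ.erase i, (t • Xv F N i - Xv F N k) / (Xv F N i - Xv F N k))) *
          Γ i ((Γ j).symm f) := by
    have step : MacB F N t Γ n (Mac F N t Γ m f)
        = ∑ j : Fin N, ∑ i : Fin N,
            (Xv F N j ^ n *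
              (∏ k ∈ Finset.univ.erase j, (Xv F N j - t • Xv F N k) / (Xv F N j - Xv F N k)) *
              (Γ j).symm (Xv F N i ^ m *
                ∏ k ∈ Finset.univ.erase i, (t • Xv F N i - Xv F N k) / (Xv F N i - Xv F N k))) *
            Γ i ((Γ j).symm f) := by
      unfold Mac MacB
      refine Finset.sum_congr rfl fun j _ => ?_
      rw [map_sum, Finset.mul_sum]
      refine Finset.sum_congr rfl fun i _ => ?_
      rw [map_mul, hswap i j f, ← mul_assoc]
    rw [step, Finset.sum_comm]
  rw [e1, e2, ← Finset.sum_sub_distrib, Finset.sum_mul]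
  refine Finset.sum_congr rfl fun i _ => ?_
  rw [← Finset.sum_sub_distrib, Finset.sum_eq_single i]
  · rw [AlgEquiv.apply_symm_apply, ← sub_mul,
      Statement3Aux.diag F q t hq N Γ hΓ i m n]
  · intro j _ hji
    rw [Statement3Aux.offdiag F q t hq N Γ hΓ i j (Ne.symm hji) m n, sub_self]
  · intro h
    exact absurd (Finset.mem_univ i) h


end
end

section
/- Define R(a,b,c) := ((t·b − a)(t·a − q·b))/((a − q·b)(b − a)) · ((t·c − a)(t·a − q·c))/((a − q·c)(c − a)) · ((t·c − b)(t·b − q·c))/((b − q·c)(c − b)) and G(a,b,c) := (b/c) · ( R(a,b,c) − R(a,c,b) − R(b,c,a) + R(c,b,a) ), as elements of F(v₁,v₂,v₃) when evaluated at the variables. Then the full symmetrization vanishes: Σ_{σ ∈ S₃} G(v_{σ(1)}, v_{σ(2)}, v_{σ(3)}) = 0 in F(v₁,v₂,v₃). (This rational-function identity is the shuffle-algebra form of the Serre relation for the fundamental Macdonald currents.) -/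
/-!
Write `R(a,b,c) = ω(a,b) ω(a,c) ω(b,c)` with `ω(x,y) = (ty - x)(tx - qy) / ((x - qy)(y - x))`.
The summand factors as `G(a,b,c) = (b/c) (ω(b,c) - ω(c,b)) (ω(a,b) ω(a,c) - ω(b,a) ω(c,a))`,
so pairing each permutation with the one exchanging its last two entries leaves three terms, one
for each choice of the first variable. Over the common denominator
`abc ∏_{x ≠ y} (x - q y) ∏_{x < y} (x - y)` their numerators cancel by a polynomial identity.
-/

open scoped BigOperators

noncomputable section

/-- The rational function
`R(a,b,c) = ((tb−a)(ta−qb))/((a−qb)(b−a)) · ((tc−a)(ta−qc))/((a−qc)(c−a)) ·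
((tc−b)(tb−qc))/((b−qc)(c−b))`. -/
noncomputable def Rfun (F : Type) [Field F] (q t : F) (a b c : RatF F 3) : RatF F 3 :=
  ((t • b - a) * (t • a - q • b)) / ((a - q • b) * (b - a)) *
    (((t • c - a) * (t • a - q • c)) / ((a - q • c) * (c - a))) *
    (((t • c - b) * (t • b - q • c)) / ((b - q • c) * (c - b)))

/-- `G(a,b,c) = (b/c)·(R(a,b,c) − R(a,c,b) − R(b,c,a) + R(c,b,a))`. -/
noncomputable def Gfun (F : Type) [Field F] (q t : F) (a b c : RatF F 3) : RatF F 3 :=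
  (b / c) * (Rfun F q t a b c - Rfun F q t a c b - Rfun F q t b c a + Rfun F q t c b a)

theorem Fin.sum_perm_three {M : Type*} [AddCommMonoid M] (f : Fin 3 → Fin 3 → Fin 3 → M) :
    ∑ σ : Equiv.Perm (Fin 3), f (σ 0) (σ 1) (σ 2) =
      f 0 1 2 + f 0 2 1 + f 1 0 2 + f 1 2 0 + f 2 0 1 + f 2 1 0 := by
  rw [show (Finset.univ : Finset (Equiv.Perm (Fin 3))) =
    {1, .swap 1 2, .swap 0 1, finRotate 3, (finRotate 3)⁻¹, .swap 0 2} by decide]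
  rw [Finset.sum_insert (by decide), Finset.sum_insert (by decide), Finset.sum_insert (by decide),
    Finset.sum_insert (by decide), Finset.sum_insert (by decide), Finset.sum_singleton]
  simp only [add_assoc]
  rfl

section
variable {K : Type*} [Field K] (Q T : K)

def pairNumer (x y : K) : K := (T*y - x) * (T*x - Q*y)

def shuffleFactor (x y : K) : K := pairNumer Q T x y / ((x - Q*y) * (y - x))

def antisymmNumer (x y : K) : K :=
  pairNumer Q T x y * (y - Q*x) + pairNumer Q T y x * (x - Q*y)

def crossNumer (a b c : K) : K :=
  pairNumer Q T a b * pairNumer Q T a c * (b - Q*a) * (c - Q*a) -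
    pairNumer Q T b a * pairNumer Q T c a * (a - Q*b) * (a - Q*c)

theorem shuffleFactor_sub_swap {x y : K} (hxy : x - Q*y ≠ 0) (hyx : y - Q*x ≠ 0)
    (h : y - x ≠ 0) :
    shuffleFactor Q T x y - shuffleFactor Q T y x =
      antisymmNumer Q T x y / ((x - Q*y) * (y - Q*x) * (y - x)) := by
  have h' : x - y ≠ 0 := by rwa [← neg_sub, neg_ne_zero]
  rw [shuffleFactor, shuffleFactor, div_sub_div _ _ (mul_ne_zero hxy h) (mul_ne_zero hyx h'),
    div_eq_div_iff (by positivity) (by positivity), antisymmNumer]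
  ring

theorem shuffleFactor_mul_sub_swap {a b c : K} (hab : a - Q*b ≠ 0) (hac : a - Q*c ≠ 0)
    (hba : b - Q*a ≠ 0) (hca : c - Q*a ≠ 0) (hb : b - a ≠ 0) (hc : c - a ≠ 0) :
    shuffleFactor Q T a b * shuffleFactor Q T a c -
        shuffleFactor Q T b a * shuffleFactor Q T c a =
      crossNumer Q T a b c /
        ((a - Q*b) * (a - Q*c) * (b - Q*a) * (c - Q*a) * (b - a) * (c - a)) := by
  have hb' : a - b ≠ 0 := by rwa [← neg_sub, neg_ne_zero]
  have hc' : a - c ≠ 0 := by rwa [← neg_sub, neg_ne_zero]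
  simp only [shuffleFactor, div_mul_div_comm]
  rw [div_sub_div _ _ (by positivity) (by positivity),
    div_eq_div_iff (by positivity) (by positivity), crossNumer]
  ring

def serreTerm (a b c : K) : K :=
  b / c * (shuffleFactor Q T a b * shuffleFactor Q T a c * shuffleFactor Q T b c -
    shuffleFactor Q T a c * shuffleFactor Q T a b * shuffleFactor Q T c b -
    shuffleFactor Q T b c * shuffleFactor Q T b a * shuffleFactor Q T c a +
    shuffleFactor Q T c b * shuffleFactor Q T c a * shuffleFactor Q T b a)

def serrePair (a b c : K) : K :=
  (b / c - c / b) * (shuffleFactor Q T b c - shuffleFactor Q T c b) *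
    (shuffleFactor Q T a b * shuffleFactor Q T a c - shuffleFactor Q T b a * shuffleFactor Q T c a)

theorem serreTerm_add_serreTerm_swap (a b c : K) :
    serreTerm Q T a b c + serreTerm Q T a c b = serrePair Q T a b c := by
  unfold serreTerm serrePair
  ring

def serreDenom (a b c : K) : K :=
  a * b * c * ((a - Q*b) * (a - Q*c) * (b - Q*a) * (b - Q*c) * (c - Q*a) * (c - Q*b)) *
    ((a - b) * (a - c) * (b - c))

theorem serreDenom_rotate (a b c : K) : serreDenom Q b c a = serreDenom Q a b c := by
  unfold serreDenom
  ring

theorem serreDenom_mul_serrePair {v : Fin 3 → K} (hv0 : ∀ i, v i ≠ 0)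
    (hv : Function.Injective v) (hQ : ∀ i j, i ≠ j → v i - Q * v j ≠ 0) {i j k : Fin 3}
    (hij : i ≠ j) (hik : i ≠ k) (hjk : j ≠ k) :
    serreDenom Q (v i) (v j) (v k) * serrePair Q T (v i) (v j) (v k) =
      -(v i * (v j + v k) * (v j - v k) * antisymmNumer Q T (v j) (v k) *
        crossNumer Q T (v i) (v j) (v k)) := by
  have hd : ∀ {a b}, a ≠ b → v a - v b ≠ 0 := fun h => sub_ne_zero.2 (hv.ne h)
  rw [serrePair, shuffleFactor_sub_swap Q T (hQ _ _ hjk) (hQ _ _ hjk.symm) (hd hjk.symm),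
    shuffleFactor_mul_sub_swap Q T (hQ _ _ hij) (hQ _ _ hik) (hQ _ _ hij.symm) (hQ _ _ hik.symm)
      (hd hij.symm) (hd hik.symm),
    div_sub_div _ _ (hv0 k) (hv0 j), div_mul_div_comm, div_mul_div_comm, mul_div_assoc',
    div_eq_iff (by simp [hv0, hd, hQ, hij, hik, hjk, hij.symm, hik.symm, hjk.symm]), serreDenom]
  ring

theorem cyclic_sum_numer_eq_zero (a b c : K) :
    a * (b + c) * (b - c) * antisymmNumer Q T b c * crossNumer Q T a b c +
      b * (c + a) * (c - a) * antisymmNumer Q T c a * crossNumer Q T b c a +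
      c * (a + b) * (a - b) * antisymmNumer Q T a b * crossNumer Q T c a b = 0 := by
  unfold antisymmNumer crossNumer pairNumer
  ring

theorem serrePair_cyclic_sum_eq_zero {v : Fin 3 → K} (hv0 : ∀ i, v i ≠ 0)
    (hv : Function.Injective v) (hQ : ∀ i j, i ≠ j → v i - Q * v j ≠ 0) :
    serrePair Q T (v 0) (v 1) (v 2) + serrePair Q T (v 1) (v 2) (v 0) +
      serrePair Q T (v 2) (v 0) (v 1) = 0 := by
  have hD : serreDenom Q (v 0) (v 1) (v 2) ≠ 0 := by
    simp [serreDenom, hv0, sub_eq_zero, hv.eq_iff, hQ]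
  have e₁ := serreDenom_mul_serrePair Q T hv0 hv hQ (i := 0) (j := 1) (k := 2)
    (by decide) (by decide) (by decide)
  have e₂ := serreDenom_mul_serrePair Q T hv0 hv hQ (i := 1) (j := 2) (k := 0)
    (by decide) (by decide) (by decide)
  have e₃ := serreDenom_mul_serrePair Q T hv0 hv hQ (i := 2) (j := 0) (k := 1)
    (by decide) (by decide) (by decide)
  rw [serreDenom_rotate] at e₂
  rw [serreDenom_rotate, serreDenom_rotate] at e₃
  refine mul_left_cancel₀ hD ?_
  linear_combination e₁ + e₂ + e₃ - cyclic_sum_numer_eq_zero Q T (v 0) (v 1) (v 2)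

theorem sum_perm_serreTerm_eq_zero {v : Fin 3 → K} (hv0 : ∀ i, v i ≠ 0)
    (hv : Function.Injective v) (hQ : ∀ i j, i ≠ j → v i - Q * v j ≠ 0) :
    ∑ σ : Equiv.Perm (Fin 3), serreTerm Q T (v (σ 0)) (v (σ 1)) (v (σ 2)) = 0 := by
  rw [Fin.sum_perm_three fun i j k => serreTerm Q T (v i) (v j) (v k)]
  linear_combination serreTerm_add_serreTerm_swap Q T (v 0) (v 1) (v 2) +
    serreTerm_add_serreTerm_swap Q T (v 1) (v 2) (v 0) +
    serreTerm_add_serreTerm_swap Q T (v 2) (v 0) (v 1) + serrePair_cyclic_sum_eq_zero Q T hv0 hv hQ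

end

namespace Xv
variable (F : Type) [Field F] {N : ℕ}

theorem injective : Function.Injective (Xv F N) :=
  (IsFractionRing.injective _ _).comp MvPolynomial.X_injective

theorem ne_zero (i : Fin N) : Xv F N i ≠ 0 :=
  (map_ne_zero_iff _ (IsFractionRing.injective _ _)).2 (MvPolynomial.X_ne_zero i)

theorem sub_algebraMap_mul_ne_zero (r : F) {i j : Fin N} (h : i ≠ j) :
    Xv F N i - algebraMap F (RatF F N) r * Xv F N j ≠ 0 := by
  rw [Xv, Xv, IsScalarTower.algebraMap_apply F (MvPolynomial (Fin N) F), ← map_mul, ← map_sub,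
    map_ne_zero_iff _ (IsFractionRing.injective _ _)]
  intro h0
  simpa [h.symm] using congrArg (MvPolynomial.eval (Pi.single i 1)) h0

end Xv

theorem Gfun_eq_serreTerm (F : Type) [Field F] (q t : F) (a b c : RatF F 3) :
    Gfun F q t a b c = serreTerm (algebraMap F _ q) (algebraMap F _ t) a b c := by
  simp only [Gfun, Rfun, serreTerm, shuffleFactor, pairNumer, Algebra.smul_def]

theorem statement6_general (F : Type) [Field F] (q t : F) :
    ∑ σ : Equiv.Perm (Fin 3),
      Gfun F q t (Xv F 3 (σ 0)) (Xv F 3 (σ 1)) (Xv F 3 (σ 2)) = 0 := by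
  simp only [Gfun_eq_serreTerm]
  exact sum_perm_serreTerm_eq_zero _ _ (Xv.ne_zero F) (Xv.injective F)
    fun _ _ h => Xv.sub_algebraMap_mul_ne_zero F q h

/-- the full symmetrization `Σ_{σ∈S₃} G(v_{σ(1)},v_{σ(2)},v_{σ(3)}) = 0`
in `F(v₁,v₂,v₃)`. -/
theorem statement6 (F : Type) [Field F] [CharZero F] (q t : F) (hq : q ≠ 0) (ht : t ≠ 0) :
    ∑ σ : Equiv.Perm (Fin 3),
      Gfun F q t (Xv F 3 (σ 0)) (Xv F 3 (σ 1)) (Xv F 3 (σ 2)) = 0 :=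
  statement6_general F q t

end
end

section
/- In the field F(x₁,…,x_N) the identity Σ_{i=1}^N Π_{j≠i} (t·xᵢ − xⱼ)/(xᵢ − xⱼ) = 1 + t + t² + ⋯ + t^{N−1} holds; that is, the left-hand side is the constant rational function (tᴺ − 1)/(t − 1). -/
open scoped BigOperators

noncomputable section

open Finset Polynomial in
private lemma statement7_aux {K : Type*} [Field K] (τ : K) (N : ℕ) (x : Fin N → K)
    (hinj : Function.Injective x) (h0 : ∀ i, x i ≠ 0) :
    τ ^ N = 1 + (τ - 1) *
      ∑ i : Fin N, ∏ j ∈ Finset.univ.erase i, (τ * x i - x j) / (x i - x j) := by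
  classical
  set v : Fin (N+1) → K := Fin.cases 0 x with hv_def
  have hv0 : v 0 = 0 := rfl
  have hvs : ∀ i, v (Fin.succ i) = x i := fun i => rfl
  have hv : Function.Injective v := by
    intro a b hab
    induction a using Fin.cases with
    | zero =>
      induction b using Fin.cases with
      | zero => rfl
      | succ j => rw [hv0, hvs] at hab; exact absurd hab.symm (h0 j)
    | succ i =>
      induction b using Fin.cases with
      | zero => rw [hv0, hvs] at hab; exact absurd hab (h0 i)
      | succ j => rw [hvs, hvs] at hab; exact congrArg Fin.succ (hinj hab)
  set P : K[X] := ∏ j : Fin N, (C τ * X - C (x j)) with hP_def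
  have hdegP : P.degree < ((Finset.univ : Finset (Fin (N+1))).card : ℕ) := by
    have h1 : P.natDegree ≤ N := by
      refine le_trans (natDegree_prod_le _ _) ?_
      calc ∑ j : Fin N, (C τ * X - C (x j)).natDegree
          ≤ ∑ _j : Fin N, 1 := by
            refine Finset.sum_le_sum fun j _ => ?_
            have : C τ * X - C (x j) = C τ * X + C (-(x j)) := by ring_nf; rw [map_neg]; ring
            rw [this]; exact natDegree_linear_le
        _ = N := by simp
    rw [Finset.card_univ, Fintype.card_fin]
    refine lt_of_le_of_lt degree_le_natDegree ?_
    exact_mod_cast Nat.lt_succ_of_le h1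
  have hP := Lagrange.eq_interpolate (f := P) hv.injOn hdegP
  have hcoeff := congrArg (fun q : K[X] => q.coeff N) hP
  simp only [Lagrange.interpolate_apply, finset_sum_coeff, coeff_C_mul] at hcoeff
  -- coeff N P = τ ^ N
  have hPN : P.coeff N = τ ^ N := by
    have hdd : ∀ j ∈ (Finset.univ : Finset (Fin N)),
        (C τ * X - C (x j)).natDegree ≤ 1 := by
      intro j _
      have : C τ * X - C (x j) = C τ * X + C (-(x j)) := by rw [map_neg]; ring
      rw [this]; exact natDegree_linear_le
    have h1 := coeff_prod_of_natDegree_le (s := (Finset.univ : Finset (Fin N)))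
      (fun j => C τ * X - C (x j)) 1 hdd
    simp only [Finset.card_univ, Fintype.card_fin, mul_one] at h1
    rw [hP_def, h1]
    have h2 : ∀ j ∈ (Finset.univ : Finset (Fin N)), (C τ * X - C (x j)).coeff 1 = τ := by
      intro j _; simp [coeff_sub, coeff_C_mul, coeff_C]
    rw [Finset.prod_congr rfl h2, Finset.prod_const, Finset.card_univ, Fintype.card_fin]
  -- coeff N of basis
  have hbasis : ∀ i : Fin (N+1), (Lagrange.basis Finset.univ v i).coeff N =
      ∏ b ∈ Finset.univ.erase i, (v i - v b)⁻¹ := by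
    intro i
    have hdd : ∀ b ∈ Finset.univ.erase i, (Lagrange.basisDivisor (v i) (v b)).natDegree ≤ 1 := by
      intro b hb
      have hne : v i ≠ v b := fun h => (Finset.mem_erase.mp hb).1 (hv h).symm
      exact le_of_eq (Lagrange.natDegree_basisDivisor_of_ne hne)
    have h1 := coeff_prod_of_natDegree_le (s := Finset.univ.erase i)
      (fun b => Lagrange.basisDivisor (v i) (v b)) 1 hdd
    have hc : (Finset.univ.erase i).card = N := by
      simp [Finset.card_erase_of_mem (Finset.mem_univ i)]
    rw [hc, mul_one] at h1
    rw [Lagrange.basis, h1]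
    refine Finset.prod_congr rfl fun b hb => ?_
    simp [Lagrange.basisDivisor, coeff_C_mul, coeff_sub, coeff_C]
  rw [hPN] at hcoeff
  simp only [hbasis] at hcoeff
  -- now hcoeff : ∑ i, eval (v i) P * ∏ ... = τ ^ N
  rw [hcoeff, Fin.sum_univ_succ]
  -- the two finset identities
  have herase0 : (Finset.univ.erase (0 : Fin (N+1))) = Finset.univ.image Fin.succ := by
    ext b; cases b using Fin.cases <;> simp [Fin.succ_ne_zero, eq_comm]
  have heraseS : ∀ i : Fin N, (Finset.univ.erase (Fin.succ i)) =
      insert (0 : Fin (N+1)) ((Finset.univ.erase i).image Fin.succ) := by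
    intro i
    ext b; cases b using Fin.cases <;> simp [Fin.succ_ne_zero, eq_comm, Fin.succ_inj]
  have hEval : ∀ y : K, P.eval y = ∏ j : Fin N, (τ * y - x j) := by
    intro y; rw [hP_def, eval_prod]; exact Finset.prod_congr rfl fun j _ => by simp
  -- term at 0
  have hterm0 : P.eval (v 0) * ∏ b ∈ Finset.univ.erase (0 : Fin (N+1)), (v 0 - v b)⁻¹ = 1 := by
    rw [hv0, hEval, herase0, Finset.prod_image (fun a _ b _ h => Fin.succ_injective _ h)]
    simp only [hvs, hv0]
    rw [← Finset.prod_mul_distrib]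
    refine Finset.prod_eq_one fun j _ => ?_
    simp only [mul_zero, zero_sub]
    exact mul_inv_cancel₀ (neg_ne_zero.mpr (h0 j))
  rw [hterm0]
  congr 1
  rw [Finset.mul_sum]
  refine Finset.sum_congr rfl fun i _ => ?_
  rw [hvs, hEval, heraseS i,
    Finset.prod_insert (by simp [Fin.succ_ne_zero]),
    Finset.prod_image (fun a _ b _ h => Fin.succ_injective _ h)]
  simp only [hvs, hv0, sub_zero]
  rw [← Finset.mul_prod_erase Finset.univ (fun j => τ * x i - x j) (Finset.mem_univ i)]
  have hxi := h0 i
  have h1 : τ * x i - x i = (τ - 1) * x i := by ring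
  rw [h1]
  simp only [div_eq_mul_inv, Finset.prod_mul_distrib, Finset.prod_inv_distrib]
  have hxx : x i * (x i)⁻¹ = 1 := mul_inv_cancel₀ hxi
  linear_combination ((τ - 1) * (∏ j ∈ Finset.univ.erase i, (τ * x i - x j)) *
    (∏ j ∈ Finset.univ.erase i, (x i - x j))⁻¹) * hxx

/-- `Σᵢ Πⱼ≠ᵢ (t·xᵢ − xⱼ)/(xᵢ − xⱼ) = 1 + t + ⋯ + t^{N−1}` in `F(x₁,…,x_N)`. -/
theorem statement7 (F : Type) [Field F] [CharZero F] (t : F) (N : ℕ) (hN : 1 ≤ N) :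
    ∑ i : Fin N, ∏ j ∈ Finset.univ.erase i,
        (t • Xv F N i - Xv F N j) / (Xv F N i - Xv F N j) =
      algebraMap F (RatF F N) (∑ k ∈ Finset.range N, t ^ k) := by
  classical
  set τ : RatF F N := algebraMap F (RatF F N) t with hτ
  have halg : Function.Injective (algebraMap F (RatF F N)) := RingHom.injective _
  have hfrac : Function.Injective (algebraMap (MvPolynomial (Fin N) F) (RatF F N)) :=
    IsFractionRing.injective _ _
  have hxinj : Function.Injective (Xv F N) := fun a b h =>
    MvPolynomial.X_injective (hfrac h)
  have hx0 : ∀ i, Xv F N i ≠ 0 := fun i h =>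
    MvPolynomial.X_ne_zero i ((map_eq_zero_iff _ hfrac).mp h)
  have hsmul : ∀ i, t • Xv F N i = τ * Xv F N i := fun i => Algebra.smul_def t _
  simp only [hsmul]
  have hmap : algebraMap F (RatF F N) (∑ k ∈ Finset.range N, t ^ k)
      = ∑ k ∈ Finset.range N, τ ^ k := by
    rw [map_sum]; exact Finset.sum_congr rfl fun k _ => map_pow _ _ _
  rw [hmap]
  by_cases ht : t = 1
  · have hτ1 : τ = 1 := by rw [hτ, ht, map_one]
    rw [hτ1]
    simp only [one_mul, one_pow]
    have hone : ∀ i ∈ (Finset.univ : Finset (Fin N)),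
        ∏ j ∈ Finset.univ.erase i, (Xv F N i - Xv F N j) / (Xv F N i - Xv F N j)
          = (1 : RatF F N) := by
      intro i _
      refine Finset.prod_eq_one fun j hj => div_self ?_
      exact sub_ne_zero.mpr fun h => (Finset.mem_erase.mp hj).1 (hxinj h).symm
    rw [Finset.sum_congr rfl hone]
    simp
  · have hkey := statement7_aux τ N (Xv F N) hxinj hx0
    have hτ1 : τ - 1 ≠ 0 := by
      refine sub_ne_zero.mpr fun h => ht (halg ?_)
      rw [map_one]; exact h
    refine mul_left_cancel₀ hτ1 ?_
    have hg := geom_sum_mul τ N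
    linear_combination -hkey - hg

end
end

section
/- For every k ∈ ℤ and n ∈ ℤ, letting p_k denote the operator of multiplication by the symmetric Laurent polynomial Σ_{i=1}^N xᵢᵏ, one has the commutation relations p_k ∘ 𝓜ₙ − 𝓜ₙ ∘ p_k = (1 − qᵏ) · 𝓜_{n+k} and p_k ∘ 𝓑ₙ − 𝓑ₙ ∘ p_k = (1 − q^{−k}) · 𝓑_{n+k} as operators on K. -/
open scoped BigOperators

noncomputable section

lemma aux_comm (F : Type) [Field F] (N : ℕ) (c : F)
    (σ : Fin N → (RatF F N ≃ₐ[F] RatF F N))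
    (hσ : ∀ i j : Fin N, σ i (Xv F N j) = if j = i then c • Xv F N j else Xv F N j)
    (A : Fin N → RatF F N) (k n : ℤ) (f : RatF F N) :
    (∑ i : Fin N, Xv F N i ^ k) * (∑ i : Fin N, Xv F N i ^ n * A i * σ i f)
      - (∑ i : Fin N, Xv F N i ^ n * A i * σ i ((∑ j : Fin N, Xv F N j ^ k) * f))
    = (1 - c ^ k) • ∑ i : Fin N, Xv F N i ^ (n + k) * A i * σ i f := by
  have hX : ∀ i : Fin N, Xv F N i ≠ 0 := by
    intro i
    simp only [Xv, ne_eq, IsFractionRing.to_map_eq_zero_iff]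
    exact MvPolynomial.X_ne_zero i
  have hσP : ∀ i : Fin N, σ i (∑ j : Fin N, Xv F N j ^ k)
      = (∑ j : Fin N, Xv F N j ^ k) + (c ^ k - 1) • Xv F N i ^ k := by
    intro i
    rw [map_sum]
    have key : ∀ j : Fin N, σ i (Xv F N j ^ k)
        = Xv F N j ^ k + (if j = i then (c ^ k - 1) • Xv F N i ^ k else 0) := by
      intro j
      rw [map_zpow₀, hσ]
      by_cases h : j = i
      · subst h
        simp only [eq_self_iff_true, if_true]
        rw [Algebra.smul_def, mul_zpow, ← map_zpow₀, Algebra.smul_def, map_sub, map_one]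
        ring
      · simp [h]
    rw [Finset.sum_congr rfl fun j _ => key j, Finset.sum_add_distrib,
      Finset.sum_ite_eq' Finset.univ i fun _ => (c ^ k - 1) • Xv F N i ^ k]
    simp
  rw [Finset.mul_sum, ← Finset.sum_sub_distrib, Finset.smul_sum]
  refine Finset.sum_congr rfl fun i _ => ?_
  rw [map_mul, hσP i, zpow_add₀ (hX i), Algebra.smul_def, Algebra.smul_def,
    map_sub, map_sub, map_one, map_zpow₀]
  ring

/-- with `p_k` the operator of multiplication by `Σᵢ xᵢᵏ`, one has
`[p_k, 𝓜ₙ] = (1 − qᵏ)·𝓜_{n+k}` and `[p_k, 𝓑ₙ] = (1 − q^{−k})·𝓑_{n+k}`. -/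
theorem statement8 (F : Type) [Field F] [CharZero F] (q t : F) (hq : q ≠ 0) (ht : t ≠ 0)
    (N : ℕ) (hN : 1 ≤ N)
    (Γ : Fin N → (RatF F N ≃ₐ[F] RatF F N))
    (hΓ : ∀ i j : Fin N, Γ i (Xv F N j) = if j = i then q • Xv F N j else Xv F N j)
    (k n : ℤ) (f : RatF F N) :
    (∑ i : Fin N, Xv F N i ^ k) * Mac F N t Γ n f
        - Mac F N t Γ n ((∑ i : Fin N, Xv F N i ^ k) * f)
      = (1 - q ^ k) • Mac F N t Γ (n + k) f ∧
    (∑ i : Fin N, Xv F N i ^ k) * MacB F N t Γ n f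
        - MacB F N t Γ n ((∑ i : Fin N, Xv F N i ^ k) * f)
      = (1 - q ^ (-k)) • MacB F N t Γ (n + k) f := by
  have hΓ' : ∀ i j : Fin N, (Γ i).symm (Xv F N j)
      = if j = i then q⁻¹ • Xv F N j else Xv F N j := by
    intro i j
    apply (Γ i).injective
    rw [AlgEquiv.apply_symm_apply]
    by_cases h : j = i
    · subst h
      rw [if_pos rfl, Algebra.smul_def, map_mul, AlgEquiv.commutes, hΓ, if_pos rfl,
        Algebra.smul_def, ← mul_assoc, ← map_mul, inv_mul_cancel₀ hq, map_one, one_mul]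
    · simp [hΓ, h]
  constructor
  · simpa only [Mac] using aux_comm F N q Γ hΓ
      (fun i => ∏ j ∈ Finset.univ.erase i,
        (t • Xv F N i - Xv F N j) / (Xv F N i - Xv F N j)) k n f
  · have h2 := aux_comm F N q⁻¹ (fun i => (Γ i).symm) hΓ'
      (fun i => ∏ j ∈ Finset.univ.erase i,
        (Xv F N i - t • Xv F N j) / (Xv F N i - Xv F N j)) k n f
    rw [inv_zpow, ← zpow_neg] at h2
    simpa only [MacB] using h2


end
end
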